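/- The maximal deviation between CLσ(u|d) and the clipped ReLU min(max(u,0),d) over u ∈ ℝ is (d/2)(1 - s(σ|d)), attained at u = 0 and u = d with opposite signs. -/

import Mathlib

/-!
For `u ≥ 0` the Laplace tail gives exactly `L σ u = u + σ log 2`, while for `u < 0` one has
`0 < L σ u < σ log 2`. Write `b = σ log 2`, so that `s b = (d/2)(1 - s)`. On `[0, d]` both
`L`-terms are affine and `CL σ d u - u = (1 - s)(d/2 - u)`, which is extremal exactly at the
endpoints. Below `0` the error is `s L σ u ∈ (0, s b)`, and above `d` it is `-s L σ (d - u)`,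
so neither tail exceeds `s b = (d/2)(1 - s)`.
-/

noncomputable def F (u : ℝ) : ℝ := if u ≤ 0 then Real.exp u / 2 else 1 - Real.exp (-u) / 2

noncomputable def L (σ u : ℝ) : ℝ := -σ * Real.log (1 - F (u / σ))

noncomputable def s (σ d : ℝ) : ℝ := (d / 2) / (d / 2 + σ * Real.log 2)

noncomputable def CL (σ d u : ℝ) : ℝ :=
  s σ d * (L σ u - u - L σ (d - u)) + d / 2 * (1 + s σ d)

open Real

lemma one_sub_F_of_nonneg {x : ℝ} (hx : 0 ≤ x) : 1 - F x = exp (-x) / 2 := by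
  unfold F
  split_ifs with h
  · rw [le_antisymm h hx]; norm_num
  · ring

lemma F_of_nonpos {x : ℝ} (hx : x ≤ 0) : F x = exp x / 2 := if_pos hx

section

variable {σ d u : ℝ}

lemma L_of_nonneg (hσ : 0 < σ) (hu : 0 ≤ u) : L σ u = u + σ * log 2 := by
  rw [L, one_sub_F_of_nonneg (div_nonneg hu hσ.le), log_div (exp_ne_zero _) two_ne_zero,
    log_exp]
  field_simp
  ring

lemma L_mem_Ioo_of_neg (hσ : 0 < σ) (hu : u < 0) : L σ u ∈ Set.Ioo 0 (σ * log 2) := by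
  have hneg : u / σ < 0 := div_neg_of_neg_of_pos hu hσ
  have hexp_lt : exp (u / σ) < 1 := exp_lt_one_iff.mpr hneg
  have hexp_pos : 0 < exp (u / σ) := exp_pos _
  have hlog_neg : log (1 - exp (u / σ) / 2) < 0 := log_neg (by linarith) (by linarith)
  have hlog_gt : -log 2 < log (1 - exp (u / σ) / 2) := by
    rw [← log_inv, ← one_div]
    exact log_lt_log (by norm_num) (by linarith)
  rw [L, F_of_nonpos hneg.le]
  constructor <;> nlinarith

lemma s_pos (hσ : 0 < σ) (hd : 0 < d) : 0 < s σ d :=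
  div_pos (half_pos hd) (by positivity)

lemma s_lt_one (hσ : 0 < σ) (hd : 0 < d) : s σ d < 1 := by
  rw [s, div_lt_one (by positivity)]
  simp only [lt_add_iff_pos_right]
  positivity

lemma s_mul_log_two (hσ : 0 < σ) (hd : 0 ≤ d) :
    s σ d * (σ * log 2) = d / 2 * (1 - s σ d) := by
  have : d / 2 + σ * log 2 ≠ 0 := by positivity
  rw [s]
  field_simp
  ring

lemma CL_sub_clip_of_neg (hσ : 0 < σ) (hd : 0 ≤ d) (hu : u < 0) :
    CL σ d u - min (max u 0) d = s σ d * L σ u := by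
  rw [CL, L_of_nonneg hσ (by linarith : 0 ≤ d - u), max_eq_right hu.le, min_eq_left hd]
  linear_combination -s_mul_log_two hσ hd

lemma CL_sub_clip_of_mem_Icc (hσ : 0 < σ) (hu : u ∈ Set.Icc 0 d) :
    CL σ d u - min (max u 0) d = (1 - s σ d) * (d / 2 - u) := by
  obtain ⟨hu0, hud⟩ := hu
  rw [CL, L_of_nonneg hσ hu0, L_of_nonneg hσ (by linarith : 0 ≤ d - u), max_eq_left hu0,
    min_eq_left hud]
  ring

lemma CL_sub_clip_of_gt (hσ : 0 < σ) (hd : 0 ≤ d) (hu : d < u) :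
    CL σ d u - min (max u 0) d = -(s σ d * L σ (d - u)) := by
  rw [CL, L_of_nonneg hσ (by linarith : 0 ≤ u), max_eq_left (by linarith), min_eq_right hu.le]
  linear_combination s_mul_log_two hσ hd

lemma abs_s_mul_L_lt (hσ : 0 < σ) (hd : 0 < d) (hu : u < 0) :
    |s σ d * L σ u| < d / 2 * (1 - s σ d) := by
  obtain ⟨hL0, hLb⟩ := L_mem_Ioo_of_neg hσ hu
  have hs := s_pos hσ hd
  rw [abs_of_pos (mul_pos hs hL0), ← s_mul_log_two hσ hd.le]
  exact mul_lt_mul_of_pos_left hLb hs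

lemma abs_CL_sub_clip_le (hσ : 0 < σ) (hd : 0 < d) (u : ℝ) :
    |CL σ d u - min (max u 0) d| ≤ d / 2 * (1 - s σ d) := by
  rcases lt_or_ge u 0 with hu0 | hu0
  · rw [CL_sub_clip_of_neg hσ hd.le hu0]
    exact (abs_s_mul_L_lt hσ hd hu0).le
  rcases le_or_gt u d with hud | hud
  · have hs : 0 ≤ 1 - s σ d := sub_nonneg.mpr (s_lt_one hσ hd).le
    rw [CL_sub_clip_of_mem_Icc hσ ⟨hu0, hud⟩, abs_mul, abs_of_nonneg hs, mul_comm]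
    gcongr
    rw [abs_le]
    constructor <;> linarith
  · rw [CL_sub_clip_of_gt hσ hd.le hud, abs_neg]
    exact (abs_s_mul_L_lt hσ hd (by linarith)).le

end

theorem stmt19 (d : ℝ) (hd : 0 < d) (σ : ℝ) (hσ : 0 < σ) :
    (⨆ u : ℝ, |CL σ d u - min (max u 0) d|) = d / 2 * (1 - s σ d) ∧
    CL σ d 0 - min (max (0 : ℝ) 0) d = d / 2 * (1 - s σ d) ∧
    CL σ d d - min (max d 0) d = -(d / 2 * (1 - s σ d)) := by
  have h0 : CL σ d 0 - min (max (0 : ℝ) 0) d = d / 2 * (1 - s σ d) := by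
    rw [CL_sub_clip_of_mem_Icc hσ ⟨le_rfl, hd.le⟩]
    ring
  have hd' : CL σ d d - min (max d 0) d = -(d / 2 * (1 - s σ d)) := by
    rw [CL_sub_clip_of_mem_Icc hσ ⟨hd.le, le_rfl⟩]
    ring
  refine ⟨le_antisymm (ciSup_le (abs_CL_sub_clip_le hσ hd)) ?_, h0, hd'⟩
  have hbdd : BddAbove (Set.range fun u ↦ |CL σ d u - min (max u 0) d|) :=
    ⟨_, Set.forall_mem_range.mpr (abs_CL_sub_clip_le hσ hd)⟩
  refine le_ciSup_of_le hbdd 0 ?_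
  rw [h0]
  exact le_abs_self _
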